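/- arXiv:1806.00726 — 4 statements merged into one kernel-verified Lean document; each statement's English description precedes it below -/
import Mathlib

section
/- Fix i ≥ 0 and write i = 2m or i = 2m − 1. Then: (1) h(x,x) ∈ 2^m A for every x ∈ A_i; (2) h(x+y, x+y) − h(x,x) − h(y,y) ∈ 2^{m+1}A for all x, y ∈ A_i; (3) for λ = λ₀ + πλ₁ ∈ B with λ₀, λ₁ ∈ A, and x ∈ A_i, one has h(λx, λx) − λ₀²·h(x,x) ∈ 2^{m+1}A. Consequently x ↦ 2^{−m}h(x,x) mod 2 induces a well-defined additive, Frobenius-semilinear map A_i/πA_i → κ whose kernel is B_i/πA_i; in particular B_i is a B-submodule of A_i containing πA_i. -/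
/-- `A_i = {x ∈ L : h(x,L) ⊆ π^i B}`. -/
def AiSet {B L : Type*} [CommRing B] [AddCommGroup L] [Module B L]
    (π : B) (h : L → L → B) (i : ℕ) : Set L :=
  {x | ∀ w : L, π ^ i ∣ h x w}

/-- `B_i = {x ∈ A_i : h(x,x) ∈ 2^{m+1} A}` where `m = ⌈i/2⌉`. -/
def BiSet (A : Type*) {B L : Type*} [CommRing A] [CommRing B] [Algebra A B]
    [AddCommGroup L] [Module B L] (π : B) (h : L → L → B) (i : ℕ) : Set L :=
  {x | x ∈ AiSet π h i ∧ ∃ a : A, h x x = algebraMap A B (2 ^ ((i + 1) / 2 + 1) * a)}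

/-!
Everything rests on one computation in `B = A[π]`: if `π ^ i ∣ t` then the trace `t + σ t` lies
in `2 ^ (m + 1) A`. Indeed `π ^ i` is `(2δ) ^ k` or `(2δ) ^ k π`, the trace of `b₀ + b₁ π` is
`2 b₀`, and `π (u₀ + u₁ π) = 2 δ u₁ + u₀ π`. Since `h(x, x)` is `σ`-invariant it lies in `A` and
is half its own trace, which gives (1); the polar term `h(x+y,x+y) - h(x,x) - h(y,y)` is the
trace of `h(x, y)`, which gives (2); and `h(λx, λx) = (λ₀² - 2δλ₁²) h(x, x)` gives (3). The
properties of `x ↦ 2⁻ᵐ h(x, x) mod 2` are then congruences modulo `2 ^ (m + 1)`.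
-/

open IsLocalRing

section QuadraticExtension

variable {A B : Type*} [CommRing A] [CommRing B] [Algebra A B] {π : B} {δ : A}
  {σ : B ≃ₐ[A] B}

theorem algebraMap_injective_of_existsUnique_repr
    (hrepr : ∀ b : B, ∃! p : A × A, b = algebraMap A B p.1 + algebraMap A B p.2 * π) :
    Function.Injective (algebraMap A B) := by
  intro a a' haa'
  have hunique := (hrepr (algebraMap A B a)).unique (y₁ := (a, 0)) (y₂ := (a', 0))
  simpa [haa'] using hunique

theorem sigma_repr (hσπ : σ π = -π) (b₀ b₁ : A) :
    σ (algebraMap A B b₀ + algebraMap A B b₁ * π) =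
      algebraMap A B b₀ - algebraMap A B b₁ * π := by
  rw [map_add, map_mul, σ.commutes, σ.commutes, hσπ, mul_neg, sub_eq_add_neg]

theorem sigma_mul_self_repr (hπ : π ^ 2 = algebraMap A B (2 * δ)) (hσπ : σ π = -π)
    (b₀ b₁ : A) :
    σ (algebraMap A B b₀ + algebraMap A B b₁ * π) *
        (algebraMap A B b₀ + algebraMap A B b₁ * π) =
      algebraMap A B (b₀ ^ 2 - 2 * δ * b₁ ^ 2) := by
  rw [sigma_repr hσπ, map_sub, map_mul, map_pow, map_pow, ← hπ]
  ring

theorem add_sigma_repr (hσπ : σ π = -π) (b₀ b₁ : A) :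
    algebraMap A B b₀ + algebraMap A B b₁ * π + σ (algebraMap A B b₀ + algebraMap A B b₁ * π) =
      algebraMap A B (2 * b₀) := by
  rw [sigma_repr hσπ, map_mul, map_ofNat]
  ring

theorem exists_add_sigma_eq_of_pi_pow_dvd (hπ : π ^ 2 = algebraMap A B (2 * δ))
    (hσπ : σ π = -π)
    (hspan : ∀ b : B, ∃ p : A × A, b = algebraMap A B p.1 + algebraMap A B p.2 * π)
    {i : ℕ} {t : B} (ht : π ^ i ∣ t) :
    ∃ a : A, t + σ t = algebraMap A B (2 ^ ((i + 1) / 2 + 1) * a) := by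
  obtain ⟨u, rfl⟩ := ht
  obtain ⟨k, rfl | rfl⟩ := Nat.even_or_odd' i
  all_goals
    obtain ⟨⟨u₀, u₁⟩, rfl⟩ := hspan u
  · refine ⟨δ ^ k * u₀, ?_⟩
    rw [pow_mul, hπ, ← map_pow, map_mul σ, σ.commutes, ← mul_add, add_sigma_repr hσπ,
      ← map_mul, show (2 * k + 1) / 2 = k by omega]
    congr 1
    ring
  · have hπu : π * (algebraMap A B u₀ + algebraMap A B u₁ * π) =
        algebraMap A B (2 * δ * u₁) + algebraMap A B u₀ * π := by
      rw [map_mul, ← hπ]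
      ring
    refine ⟨δ ^ (k + 1) * u₁, ?_⟩
    rw [pow_succ, pow_mul, hπ, ← map_pow, mul_assoc, hπu, map_mul σ, σ.commutes, ← mul_add,
      add_sigma_repr hσπ, ← map_mul, show (2 * k + 1 + 1) / 2 = k + 1 by omega]
    congr 1
    ring

theorem exists_eq_algebraMap_of_sigma_eq [IsDomain A] [CharZero A] (hσπ : σ π = -π)
    (hrepr : ∀ b : B, ∃! p : A × A, b = algebraMap A B p.1 + algebraMap A B p.2 * π)
    {b : B} (hb : σ b = b) : ∃ a : A, b = algebraMap A B a := by
  obtain ⟨⟨b₀, b₁⟩, hb₀₁, huniq⟩ := hrepr b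
  have hneg : b = algebraMap A B b₀ + algebraMap A B (-b₁) * π := by
    rw [map_neg, neg_mul, ← sub_eq_add_neg, ← sigma_repr hσπ, ← hb₀₁, hb]
  have hb₁ : b₁ = 0 := by
    simpa [CharZero.neg_eq_self_iff] using congrArg Prod.snd (huniq (b₀, -b₁) hneg)
  exact ⟨b₀, by simpa [hb₁] using hb₀₁⟩

theorem exists_eq_algebraMap_of_pi_pow_dvd [IsDomain A] [CharZero A]
    (hπ : π ^ 2 = algebraMap A B (2 * δ)) (hσπ : σ π = -π)
    (hrepr : ∀ b : B, ∃! p : A × A, b = algebraMap A B p.1 + algebraMap A B p.2 * π)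
    {i : ℕ} {t : B} (ht : π ^ i ∣ t) (hfix : σ t = t) :
    ∃ a : A, t = algebraMap A B (2 ^ ((i + 1) / 2) * a) := by
  obtain ⟨t₀, rfl⟩ := exists_eq_algebraMap_of_sigma_eq hσπ hrepr hfix
  obtain ⟨a, ha⟩ := exists_add_sigma_eq_of_pi_pow_dvd hπ hσπ (fun b => (hrepr b).exists) ht
  refine ⟨a, congrArg _ (mul_left_cancel₀ (two_ne_zero (α := A)) ?_)⟩
  apply algebraMap_injective_of_existsUnique_repr hrepr
  rw [σ.commutes, ← two_mul, ← map_ofNat (algebraMap A B) 2, ← map_mul] at ha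
  rw [ha, pow_succ]
  ring_nf

end QuadraticExtension

section HermitianForm

variable {A B L : Type*} [CommRing A] [CommRing B] [Algebra A B] [AddCommGroup L] [Module B L]

structure IsHermitianForm (σ : B ≃ₐ[A] B) (h : L → L → B) : Prop where
  add_left : ∀ x y z : L, h (x + y) z = h x z + h y z
  smul_smul : ∀ (a b : B) (v w : L), h (a • v) (b • w) = σ a * b * h v w
  conj_symm : ∀ v w : L, h w v = σ (h v w)

variable {π : B} {δ : A} {σ : B ≃ₐ[A] B} {h : L → L → B} {i : ℕ}

namespace IsHermitianForm

theorem add_right (hh : IsHermitianForm σ h) (x y z : L) : h x (y + z) = h x y + h x z := by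
  rw [hh.conj_symm (y + z), hh.add_left, map_add, ← hh.conj_symm, ← hh.conj_symm]

theorem smul_left (hh : IsHermitianForm σ h) (b : B) (v w : L) : h (b • v) w = σ b * h v w := by
  simpa using hh.smul_smul b 1 v w

theorem add_self_sub (hh : IsHermitianForm σ h) (x y : L) :
    h (x + y) (x + y) - h x x - h y y = h x y + σ (h x y) := by
  rw [hh.add_left, hh.add_right, hh.add_right, ← hh.conj_symm x y]
  ring

theorem smul_self_repr (hh : IsHermitianForm σ h) (hπ : π ^ 2 = algebraMap A B (2 * δ))
    (hσπ : σ π = -π) (b₀ b₁ : A) (x : L) :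
    h ((algebraMap A B b₀ + algebraMap A B b₁ * π) • x)
        ((algebraMap A B b₀ + algebraMap A B b₁ * π) • x) =
      algebraMap A B (b₀ ^ 2 - 2 * δ * b₁ ^ 2) * h x x := by
  rw [hh.smul_smul, sigma_mul_self_repr hπ hσπ]

theorem smul_mem_AiSet (hh : IsHermitianForm σ h) (b : B) {x : L} (hx : x ∈ AiSet π h i) :
    b • x ∈ AiSet π h i := fun w => by
  rw [hh.smul_left]
  exact (hx w).mul_left _

theorem add_mem_AiSet (hh : IsHermitianForm σ h) {x y : L} (hx : x ∈ AiSet π h i)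
    (hy : y ∈ AiSet π h i) : x + y ∈ AiSet π h i := fun w => by
  rw [hh.add_left]
  exact dvd_add (hx w) (hy w)

theorem exists_apply_self_eq [IsDomain A] [CharZero A] (hh : IsHermitianForm σ h)
    (hπ : π ^ 2 = algebraMap A B (2 * δ)) (hσπ : σ π = -π)
    (hrepr : ∀ b : B, ∃! p : A × A, b = algebraMap A B p.1 + algebraMap A B p.2 * π)
    {x : L} (hx : x ∈ AiSet π h i) : ∃ a : A, h x x = algebraMap A B (2 ^ ((i + 1) / 2) * a) :=
  exists_eq_algebraMap_of_pi_pow_dvd hπ hσπ hrepr (hx x) (hh.conj_symm x x).symm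

theorem exists_add_self_sub_eq (hh : IsHermitianForm σ h)
    (hπ : π ^ 2 = algebraMap A B (2 * δ)) (hσπ : σ π = -π)
    (hspan : ∀ b : B, ∃ p : A × A, b = algebraMap A B p.1 + algebraMap A B p.2 * π)
    {x y : L} (hx : x ∈ AiSet π h i) :
    ∃ a : A, h (x + y) (x + y) - h x x - h y y = algebraMap A B (2 ^ ((i + 1) / 2 + 1) * a) := by
  rw [hh.add_self_sub]
  exact exists_add_sigma_eq_of_pi_pow_dvd hπ hσπ hspan (hx y)

theorem exists_smul_self_sub_eq (hh : IsHermitianForm σ h)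
    (hπ : π ^ 2 = algebraMap A B (2 * δ)) (hσπ : σ π = -π) {m : ℕ} {x : L} {a : A}
    (hx : h x x = algebraMap A B (2 ^ m * a)) (b₀ b₁ : A) :
    ∃ c : A, h ((algebraMap A B b₀ + algebraMap A B b₁ * π) • x)
        ((algebraMap A B b₀ + algebraMap A B b₁ * π) • x) - algebraMap A B (b₀ ^ 2) * h x x =
      algebraMap A B (2 ^ (m + 1) * c) := by
  refine ⟨-(δ * b₁ ^ 2 * a), ?_⟩
  rw [hh.smul_self_repr hπ hσπ, hx, ← map_mul, ← map_mul, ← map_sub]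
  congr 1
  ring

theorem exists_pi_smul_self_eq (hh : IsHermitianForm σ h)
    (hπ : π ^ 2 = algebraMap A B (2 * δ)) (hσπ : σ π = -π) {m : ℕ} {x : L} {a : A}
    (hx : h x x = algebraMap A B (2 ^ m * a)) :
    ∃ c : A, h (π • x) (π • x) = algebraMap A B (2 ^ (m + 1) * c) := by
  simpa using hh.exists_smul_self_sub_eq hπ hσπ hx 0 1

end IsHermitianForm

end HermitianForm

section BiSet

variable {A B L : Type*} [CommRing A] [CommRing B] [Algebra A B] [AddCommGroup L] [Module B L]
  {π : B} {δ : A} {σ : B ≃ₐ[A] B} {h : L → L → B} {i : ℕ}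

theorem pi_smul_mem_BiSet [IsDomain A] [CharZero A] (hh : IsHermitianForm σ h)
    (hπ : π ^ 2 = algebraMap A B (2 * δ)) (hσπ : σ π = -π)
    (hrepr : ∀ b : B, ∃! p : A × A, b = algebraMap A B p.1 + algebraMap A B p.2 * π)
    {x : L} (hx : x ∈ AiSet π h i) : π • x ∈ BiSet A π h i :=
  have ⟨_, ha⟩ := hh.exists_apply_self_eq hπ hσπ hrepr hx
  ⟨hh.smul_mem_AiSet π hx, hh.exists_pi_smul_self_eq hπ hσπ ha⟩

theorem add_mem_BiSet (hh : IsHermitianForm σ h)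
    (hπ : π ^ 2 = algebraMap A B (2 * δ)) (hσπ : σ π = -π)
    (hspan : ∀ b : B, ∃ p : A × A, b = algebraMap A B p.1 + algebraMap A B p.2 * π)
    {x y : L} (hx : x ∈ BiSet A π h i) (hy : y ∈ BiSet A π h i) : x + y ∈ BiSet A π h i := by
  obtain ⟨hx, ax, hax⟩ := hx
  obtain ⟨hy, ay, hay⟩ := hy
  obtain ⟨s, hs⟩ := hh.exists_add_self_sub_eq hπ hσπ hspan (y := y) hx
  refine ⟨hh.add_mem_AiSet hx hy, ax + ay + s, ?_⟩
  rw [mul_add, mul_add, map_add, map_add, ← hax, ← hay, ← hs]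
  ring

theorem smul_mem_BiSet (hh : IsHermitianForm σ h)
    (hπ : π ^ 2 = algebraMap A B (2 * δ)) (hσπ : σ π = -π)
    (hspan : ∀ b : B, ∃ p : A × A, b = algebraMap A B p.1 + algebraMap A B p.2 * π)
    (b : B) {x : L} (hx : x ∈ BiSet A π h i) : b • x ∈ BiSet A π h i := by
  obtain ⟨hx, a, ha⟩ := hx
  obtain ⟨⟨b₀, b₁⟩, rfl⟩ := hspan b
  exact ⟨hh.smul_mem_AiSet _ hx, (b₀ ^ 2 - 2 * δ * b₁ ^ 2) * a,
    by rw [hh.smul_self_repr hπ hσπ, ha, ← map_mul, mul_left_comm]⟩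

end BiSet

section NormResidue

variable (A : Type*) {B L : Type*} [CommRing A] [IsLocalRing A] [CommRing B] [Algebra A B]

/-- The map `x ↦ 2⁻ᵐ h(x, x) mod 2`, with junk value `0` where `h(x, x) ∉ 2ᵐ A`. -/
noncomputable def normResidue (h : L → L → B) (m : ℕ) (x : L) : ResidueField A :=
  open Classical in
  if hx : ∃ a : A, h x x = algebraMap A B (2 ^ m * a) then residue A hx.choose else 0

variable {A} {h : L → L → B} {m : ℕ} {x : L}

theorem normResidue_eq [IsDomain A] [CharZero A] (hinj : Function.Injective (algebraMap A B))
    {a : A} (hx : h x x = algebraMap A B (2 ^ m * a)) : normResidue A h m x = residue A a := by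
  have hex : ∃ a : A, h x x = algebraMap A B (2 ^ m * a) := ⟨a, hx⟩
  rw [normResidue, dif_pos hex,
    mul_left_cancel₀ (pow_ne_zero m two_ne_zero) (hinj (hex.choose_spec.symm.trans hx))]

theorem normResidue_eq_of_eq_add [IsDomain A] [CharZero A] (h2 : (2 : A) ∈ maximalIdeal A)
    (hinj : Function.Injective (algebraMap A B)) {a s : A}
    (hx : h x x = algebraMap A B (2 ^ m * a) + algebraMap A B (2 ^ (m + 1) * s)) :
    normResidue A h m x = residue A a := by
  rw [normResidue_eq hinj (a := a + 2 * s), map_add, map_mul,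
    (residue_eq_zero_iff 2).mpr h2, zero_mul, add_zero]
  rw [hx, ← map_add]
  congr 1
  ring

theorem normResidue_eq_zero_iff [IsDomain A] [CharZero A]
    (hmax : maximalIdeal A = Ideal.span {2}) (hinj : Function.Injective (algebraMap A B)) {a : A}
    (hx : h x x = algebraMap A B (2 ^ m * a)) :
    normResidue A h m x = 0 ↔ ∃ c : A, h x x = algebraMap A B (2 ^ (m + 1) * c) := by
  rw [normResidue_eq hinj hx, residue_eq_zero_iff, hmax, Ideal.mem_span_singleton]
  constructor
  · rintro ⟨c, rfl⟩
    exact ⟨c, by rw [hx, pow_succ, mul_assoc]⟩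
  · rintro ⟨c, hc⟩
    refine ⟨c, mul_left_cancel₀ (pow_ne_zero m two_ne_zero) (hinj ?_)⟩
    rw [← hx, hc, pow_succ, mul_assoc]

end NormResidue

section NormResidueOnAiSet

variable {A B L : Type*} [CommRing A] [IsDomain A] [CharZero A] [IsLocalRing A] [CommRing B]
  [Algebra A B] [AddCommGroup L] [Module B L] {π : B} {δ : A} {σ : B ≃ₐ[A] B} {h : L → L → B}
  {i : ℕ}

theorem normResidue_eq_of_sub_eq_pi_smul (hh : IsHermitianForm σ h)
    (hπ : π ^ 2 = algebraMap A B (2 * δ)) (hσπ : σ π = -π)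
    (hrepr : ∀ b : B, ∃! p : A × A, b = algebraMap A B p.1 + algebraMap A B p.2 * π)
    (h2 : (2 : A) ∈ maximalIdeal A) {x y z : L} (hy : y ∈ AiSet π h i) (hz : z ∈ AiSet π h i)
    (hxyz : x - y = π • z) :
    normResidue A h ((i + 1) / 2) x = normResidue A h ((i + 1) / 2) y := by
  have hinj := algebraMap_injective_of_existsUnique_repr hrepr
  obtain ⟨a, ha⟩ := hh.exists_apply_self_eq hπ hσπ hrepr hy
  obtain ⟨c, hc⟩ := hh.exists_apply_self_eq hπ hσπ hrepr hz
  obtain ⟨s, hs⟩ := hh.exists_add_self_sub_eq hπ hσπ (fun b => (hrepr b).exists) (y := π • z) hy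
  obtain ⟨t, ht⟩ := hh.exists_pi_smul_self_eq hπ hσπ hc
  rw [sub_eq_iff_eq_add'.mp hxyz, normResidue_eq hinj ha,
    normResidue_eq_of_eq_add h2 hinj (s := s + t)]
  rw [mul_add, map_add, ← ha, ← hs, ← ht]
  ring

theorem normResidue_add (hh : IsHermitianForm σ h)
    (hπ : π ^ 2 = algebraMap A B (2 * δ)) (hσπ : σ π = -π)
    (hrepr : ∀ b : B, ∃! p : A × A, b = algebraMap A B p.1 + algebraMap A B p.2 * π)
    (h2 : (2 : A) ∈ maximalIdeal A) {x y : L} (hx : x ∈ AiSet π h i) (hy : y ∈ AiSet π h i) :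
    normResidue A h ((i + 1) / 2) (x + y) =
      normResidue A h ((i + 1) / 2) x + normResidue A h ((i + 1) / 2) y := by
  have hinj := algebraMap_injective_of_existsUnique_repr hrepr
  obtain ⟨a, ha⟩ := hh.exists_apply_self_eq hπ hσπ hrepr hx
  obtain ⟨b, hb⟩ := hh.exists_apply_self_eq hπ hσπ hrepr hy
  obtain ⟨s, hs⟩ := hh.exists_add_self_sub_eq hπ hσπ (fun b => (hrepr b).exists) (y := y) hx
  rw [normResidue_eq_of_eq_add h2 hinj (a := a + b) (s := s), normResidue_eq hinj ha,
    normResidue_eq hinj hb, map_add]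
  rw [mul_add, map_add, ← ha, ← hb, ← hs]
  ring

theorem normResidue_algebraMap_smul (hh : IsHermitianForm σ h)
    (hπ : π ^ 2 = algebraMap A B (2 * δ)) (hσπ : σ π = -π)
    (hrepr : ∀ b : B, ∃! p : A × A, b = algebraMap A B p.1 + algebraMap A B p.2 * π)
    (h2 : (2 : A) ∈ maximalIdeal A) (c : A) {x : L} (hx : x ∈ AiSet π h i) :
    normResidue A h ((i + 1) / 2) (algebraMap A B c • x) =
      residue A c ^ 2 * normResidue A h ((i + 1) / 2) x := by
  have hinj := algebraMap_injective_of_existsUnique_repr hrepr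
  obtain ⟨a, ha⟩ := hh.exists_apply_self_eq hπ hσπ hrepr hx
  obtain ⟨s, hs⟩ := hh.exists_smul_self_sub_eq hπ hσπ ha c 0
  rw [map_zero, zero_mul, add_zero] at hs
  rw [normResidue_eq_of_eq_add h2 hinj (a := c ^ 2 * a) (s := s), normResidue_eq hinj ha,
    map_mul, map_pow]
  rw [← hs, mul_left_comm, map_mul, ← ha]
  ring

theorem normResidue_eq_zero_iff_mem_BiSet (hh : IsHermitianForm σ h)
    (hπ : π ^ 2 = algebraMap A B (2 * δ)) (hσπ : σ π = -π)
    (hrepr : ∀ b : B, ∃! p : A × A, b = algebraMap A B p.1 + algebraMap A B p.2 * π)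
    (hmax : maximalIdeal A = Ideal.span {2}) {x : L} (hx : x ∈ AiSet π h i) :
    normResidue A h ((i + 1) / 2) x = 0 ↔ x ∈ BiSet A π h i := by
  obtain ⟨a, ha⟩ := hh.exists_apply_self_eq hπ hσπ hrepr hx
  rw [normResidue_eq_zero_iff hmax (algebraMap_injective_of_existsUnique_repr hrepr) ha]
  exact (and_iff_right hx).symm

end NormResidueOnAiSet

theorem norm_congruences_and_additive_map_general
    {A : Type*} [CommRing A] [IsDomain A] [IsDiscreteValuationRing A] [CharZero A]
    (hmax : IsLocalRing.maximalIdeal A = Ideal.span {2})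
    (δ : A)
    {B : Type*} [CommRing B] [Algebra A B]
    (π : B) (hπ : π ^ 2 = algebraMap A B (2 * δ))
    (σ : B ≃ₐ[A] B) (hσπ : σ π = -π)
    (hBfree : ∀ b : B, ∃! p : A × A, b = algebraMap A B p.1 + algebraMap A B p.2 * π)
    {L : Type*} [AddCommGroup L] [Module B L]
    (h : L → L → B)
    (hadd : ∀ x y z : L, h (x + y) z = h x z + h y z)
    (hsmul : ∀ (a b : B) (v w : L), h (a • v) (b • w) = σ a * b * h v w)
    (hsymm : ∀ v w : L, h w v = σ (h v w))
    (i : ℕ) :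
    -- write m = (i+1)/2, so that i = 2m or i = 2m-1
    (∀ x ∈ AiSet π h i, ∃ a : A, h x x = algebraMap A B (2 ^ ((i + 1) / 2) * a)) ∧
    (∀ x ∈ AiSet π h i, ∀ y ∈ AiSet π h i, ∃ a : A,
        h (x + y) (x + y) - h x x - h y y = algebraMap A B (2 ^ ((i + 1) / 2 + 1) * a)) ∧
    (∀ lam0 lam1 : A, ∀ x ∈ AiSet π h i, ∃ a : A,
        h ((algebraMap A B lam0 + algebraMap A B lam1 * π) • x)
            ((algebraMap A B lam0 + algebraMap A B lam1 * π) • x)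
          - algebraMap A B (lam0 ^ 2) * h x x
          = algebraMap A B (2 ^ ((i + 1) / 2 + 1) * a)) ∧
    (∃ q : L → IsLocalRing.ResidueField A,
      (∀ x ∈ AiSet π h i, ∀ a : A,
          h x x = algebraMap A B (2 ^ ((i + 1) / 2) * a) → q x = IsLocalRing.residue A a) ∧
      (∀ x ∈ AiSet π h i, ∀ y ∈ AiSet π h i,
          (∃ z ∈ AiSet π h i, x - y = π • z) → q x = q y) ∧
      (∀ x ∈ AiSet π h i, ∀ y ∈ AiSet π h i, q (x + y) = q x + q y) ∧
      (∀ c : A, ∀ x ∈ AiSet π h i,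
          q ((algebraMap A B c) • x) = (IsLocalRing.residue A c) ^ 2 * q x) ∧
      (∀ x ∈ AiSet π h i, (q x = 0 ↔ x ∈ BiSet A π h i))) ∧
    (∀ x ∈ AiSet π h i, π • x ∈ BiSet A π h i) ∧
    (∀ x ∈ BiSet A π h i, ∀ y ∈ BiSet A π h i, x + y ∈ BiSet A π h i) ∧
    (∀ (b : B), ∀ x ∈ BiSet A π h i, b • x ∈ BiSet A π h i) := by
  have hh : IsHermitianForm σ h := ⟨hadd, hsmul, hsymm⟩
  have hspan : ∀ b : B, ∃ p : A × A, b = algebraMap A B p.1 + algebraMap A B p.2 * π :=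
    fun b => (hBfree b).exists
  have h2 : (2 : A) ∈ maximalIdeal A := hmax ▸ Ideal.mem_span_singleton_self 2
  have norm_mem := fun x (hx : x ∈ AiSet π h i) => hh.exists_apply_self_eq hπ hσπ hBfree hx
  refine ⟨norm_mem, fun x hx y _ => hh.exists_add_self_sub_eq hπ hσπ hspan hx,
    fun lam0 lam1 x hx => ?_, ⟨normResidue A h ((i + 1) / 2), ?_, ?_, ?_, ?_, ?_⟩,
    fun x hx => pi_smul_mem_BiSet hh hπ hσπ hBfree hx,
    fun x hx y hy => add_mem_BiSet hh hπ hσπ hspan hx hy,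
    fun b x hx => smul_mem_BiSet hh hπ hσπ hspan b hx⟩
  · obtain ⟨a, ha⟩ := norm_mem x hx
    exact hh.exists_smul_self_sub_eq hπ hσπ ha lam0 lam1
  · exact fun x _ a ha => normResidue_eq (algebraMap_injective_of_existsUnique_repr hBfree) ha
  · rintro x - y hy ⟨z, hz, hxyz⟩
    exact normResidue_eq_of_sub_eq_pi_smul hh hπ hσπ hBfree h2 hy hz hxyz
  · exact fun x hx y hy => normResidue_add hh hπ hσπ hBfree h2 hx hy
  · exact fun c x hx => normResidue_algebraMap_smul hh hπ hσπ hBfree h2 c hx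
  · exact fun x hx => normResidue_eq_zero_iff_mem_BiSet hh hπ hσπ hBfree hmax hx

/-- basic congruence properties of the norm `h(x,x)` on `A_i`, and the
induced additive Frobenius-semilinear map `A_i/πA_i → κ` with kernel `B_i/πA_i`. -/
theorem norm_congruences_and_additive_map
    {A : Type*} [CommRing A] [IsDomain A] [IsDiscreteValuationRing A] [CharZero A]
    (hmax : IsLocalRing.maximalIdeal A = Ideal.span {2})
    [IsAdicComplete (IsLocalRing.maximalIdeal A) A]
    [CharP (IsLocalRing.ResidueField A) 2]
    [PerfectRing (IsLocalRing.ResidueField A) 2]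
    (δ : A) (hδunit : IsUnit δ) (hδ1 : (2 : A) ∣ (δ - 1))
    {B : Type*} [CommRing B] [IsDomain B] [Algebra A B]
    (π : B) (hπ : π ^ 2 = algebraMap A B (2 * δ))
    (σ : B ≃ₐ[A] B) (hσπ : σ π = -π) (hσinv : ∀ b : B, σ (σ b) = b)
    (hBfree : ∀ b : B, ∃! p : A × A, b = algebraMap A B p.1 + algebraMap A B p.2 * π)
    {L : Type*} [AddCommGroup L] [Module B L] [Module.Free B L] [Module.Finite B L]
    (h : L → L → B)
    (hadd : ∀ x y z : L, h (x + y) z = h x z + h y z)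
    (hsmul : ∀ (a b : B) (v w : L), h (a • v) (b • w) = σ a * b * h v w)
    (hsymm : ∀ v w : L, h w v = σ (h v w))
    (hnd : ∀ v : L, (∀ w : L, h v w = 0) → v = 0)
    (i : ℕ) :
    -- write m = (i+1)/2, so that i = 2m or i = 2m-1
    (∀ x ∈ AiSet π h i, ∃ a : A, h x x = algebraMap A B (2 ^ ((i + 1) / 2) * a)) ∧
    (∀ x ∈ AiSet π h i, ∀ y ∈ AiSet π h i, ∃ a : A,
        h (x + y) (x + y) - h x x - h y y = algebraMap A B (2 ^ ((i + 1) / 2 + 1) * a)) ∧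
    (∀ lam0 lam1 : A, ∀ x ∈ AiSet π h i, ∃ a : A,
        h ((algebraMap A B lam0 + algebraMap A B lam1 * π) • x)
            ((algebraMap A B lam0 + algebraMap A B lam1 * π) • x)
          - algebraMap A B (lam0 ^ 2) * h x x
          = algebraMap A B (2 ^ ((i + 1) / 2 + 1) * a)) ∧
    (∃ q : L → IsLocalRing.ResidueField A,
      (∀ x ∈ AiSet π h i, ∀ a : A,
          h x x = algebraMap A B (2 ^ ((i + 1) / 2) * a) → q x = IsLocalRing.residue A a) ∧
      (∀ x ∈ AiSet π h i, ∀ y ∈ AiSet π h i,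
          (∃ z ∈ AiSet π h i, x - y = π • z) → q x = q y) ∧
      (∀ x ∈ AiSet π h i, ∀ y ∈ AiSet π h i, q (x + y) = q x + q y) ∧
      (∀ c : A, ∀ x ∈ AiSet π h i,
          q ((algebraMap A B c) • x) = (IsLocalRing.residue A c) ^ 2 * q x) ∧
      (∀ x ∈ AiSet π h i, (q x = 0 ↔ x ∈ BiSet A π h i))) ∧
    (∀ x ∈ AiSet π h i, π • x ∈ BiSet A π h i) ∧
    (∀ x ∈ BiSet A π h i, ∀ y ∈ BiSet A π h i, x + y ∈ BiSet A π h i) ∧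
    (∀ (b : B), ∀ x ∈ BiSet A π h i, b • x ∈ BiSet A π h i) :=
  norm_congruences_and_additive_map_general hmax δ π hπ σ hσπ hBfree h hadd hsmul hsymm i
end

section
/- Let i = 2m ≥ 0 be even. Let f : L × L → B be another hermitian form on L (f(av,bw) = σ(a)b·f(v,w), f(w,v) = σ(f(v,w))) satisfying: f(x,w) − h(x,w) ∈ π^{i+1}B for all x ∈ A_i and w ∈ W_i, and f(w,w) − h(w,w) ∈ 2^{m+2}A for all w ∈ W_i. Let g : L → L be a B-linear map with g(W_i) ⊆ W_i and gw − w ∈ X_i ∩ Z_i for all w ∈ W_i. Then f(gw, gw) − h(w,w) ∈ 2^{m+2}A for every w ∈ W_i; that is, the form f ∘ g again satisfies the congruence condition (d) defining the scheme H. -/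
/-- `X_i = {x ∈ A_i : h(x,A_i) ⊆ π^{i+1} B}`. -/
def XiSet {B L : Type*} [CommRing B] [AddCommGroup L] [Module B L]
    (π : B) (h : L → L → B) (i : ℕ) : Set L :=
  {x | x ∈ AiSet π h i ∧ ∀ w ∈ AiSet π h i, π ^ (i + 1) ∣ h x w}

/-- `Y_i = {x ∈ B_i : h(x,B_i) ⊆ π^{i+1} B}`. -/
def YiSet (A : Type*) {B L : Type*} [CommRing A] [CommRing B] [Algebra A B]
    [AddCommGroup L] [Module B L] (π : B) (h : L → L → B) (i : ℕ) : Set L :=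
  {x | x ∈ BiSet A π h i ∧ ∀ w ∈ BiSet A π h i, π ^ (i + 1) ∣ h x w}

/-- `Z_i = {x ∈ Y_i : h(x,x) ∈ 2^{m+2} A}` (used for `i = 2m` even). -/
def ZiSet (A : Type*) {B L : Type*} [CommRing A] [CommRing B] [Algebra A B]
    [AddCommGroup L] [Module B L] (π : B) (h : L → L → B) (i : ℕ) : Set L :=
  {x | x ∈ YiSet A π h i ∧ ∃ a : A, h x x = algebraMap A B (2 ^ ((i + 1) / 2 + 2) * a)}

/-- `S_i = {w ∈ A_i : (ξ^{-m} h(v,w))² - ξ^{-m} h(v,v) ∈ πB for all v ∈ A_i}` for `i = 2m`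
even, expressed integrally after multiplying through by the unit multiple `ξ^{2m}` of
`π^{4m}`: namely `h(v,w)² - ξ^m h(v,v) ∈ π^{4m+1} B`, where `ξ = πσ(π) = -π²`. -/
def SiSet {B L : Type*} [CommRing B] [AddCommGroup L] [Module B L]
    (π : B) (h : L → L → B) (i : ℕ) : Set L :=
  {w | w ∈ AiSet π h i ∧ ∀ v ∈ AiSet π h i,
    π ^ (4 * ((i + 1) / 2) + 1) ∣ ((h v w) ^ 2 - (-(π ^ 2)) ^ ((i + 1) / 2) * h v v)}

/-- `W_i = X_i + ⟨S_i⟩` for even `i`, and `W_i = X_i` for odd `i`. -/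
def WiSet {B L : Type*} [CommRing B] [AddCommGroup L] [Module B L]
    (π : B) (h : L → L → B) (i : ℕ) : Set L :=
  if Even i then (Submodule.span B (XiSet π h i ∪ SiSet π h i) : Set L)
  else XiSet π h i

/-!
Write `g w = w + z` with `z ∈ X_i ∩ Z_i ⊆ W_i`. Expanding, `f(gw,gw) - h(w,w)` is the sum of
`f(w,w) - h(w,w)`, `f(z,z) - h(z,z)`, `h(z,z)`, all in `2^{m+2}A` by hypothesis, and of the
trace `f(z,w) + σ(f(z,w))`. Since `z ∈ X_i` and `w ∈ A_i`, `f(z,w) ≡ h(z,w) ≡ 0 mod π^{2m+1}`,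
and the trace of `π^{2m+1}(a + bπ)` is `2bπ^{2m+2} = 2^{m+2}δ^{m+1}b`.
-/

section TwoPow

variable (A B : Type*) [CommRing A] [CommRing B] [Algebra A B]

def twoPowA (k : ℕ) : Submodule A B :=
  Submodule.map (Algebra.linearMap A B) (Ideal.span {(2 : A) ^ k})

variable {A B}

theorem mem_twoPowA {k : ℕ} {b : B} :
    b ∈ twoPowA A B k ↔ ∃ a : A, b = algebraMap A B (2 ^ k * a) := by
  simp only [twoPowA, Submodule.mem_map, Ideal.mem_span_singleton', Algebra.linearMap_apply]
  constructor
  · rintro ⟨_, ⟨a, rfl⟩, rfl⟩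
    exact ⟨a, by rw [mul_comm]⟩
  · rintro ⟨a, rfl⟩
    exact ⟨_, ⟨a, rfl⟩, by rw [mul_comm]⟩

theorem add_conj_mem_twoPowA_of_pow_dvd {F : Type*} [FunLike F B B] [AlgHomClass F A B B]
    {σ : F} {π : B} {δ : A} (hπ : π ^ 2 = algebraMap A B (2 * δ)) (hσπ : σ π = -π)
    (hB : ∀ b : B, ∃ p : A × A, b = algebraMap A B p.1 + algebraMap A B p.2 * π)
    {m : ℕ} {x : B} (hx : π ^ (2 * m + 1) ∣ x) :
    x + σ x ∈ twoPowA A B (m + 2) := by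
  obtain ⟨c, rfl⟩ := hx
  obtain ⟨⟨a, b⟩, rfl⟩ := hB c
  have hπpow : π ^ (2 * m + 2) = algebraMap A B ((2 * δ) ^ (m + 1)) := by
    rw [show 2 * m + 2 = 2 * (m + 1) by ring, pow_mul, hπ, map_pow]
  have htrace : π ^ (2 * m + 1) * (algebraMap A B a + algebraMap A B b * π) +
      σ (π ^ (2 * m + 1) * (algebraMap A B a + algebraMap A B b * π)) =
      2 * algebraMap A B b * π ^ (2 * m + 2) := by
    simp only [map_mul, map_add, map_pow, AlgHomClass.commutes, hσπ,
      Odd.neg_pow (odd_two_mul_add_one m)]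
    ring
  rw [htrace, hπpow, mem_twoPowA]
  refine ⟨δ ^ (m + 1) * b, ?_⟩
  rw [← map_ofNat (algebraMap A B), ← map_mul, ← map_mul]
  ring_nf

end TwoPow

section Lattice

variable {B L : Type*} [CommRing B] [AddCommGroup L] [Module B L] {h : L → L → B}

theorem WiSet_subset_AiSet (π : B) {σ : B → B}
    (hadd : ∀ x y z : L, h (x + y) z = h x z + h y z)
    (hsmul : ∀ (a : B) (v w : L), h (a • v) w = σ a * h v w) (i : ℕ) :
    WiSet π h i ⊆ AiSet π h i := by
  let Ai : Submodule B L :=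
    { carrier := AiSet π h i
      add_mem' := fun hx hy w => by rw [hadd]; exact dvd_add (hx w) (hy w)
      zero_mem' := fun w => by
        rw [show h 0 w = 0 by simpa using hadd 0 0 w]
        exact dvd_zero _
      smul_mem' := fun a x hx w => by rw [hsmul]; exact (hx w).mul_left _ }
  have hX : XiSet π h i ⊆ AiSet π h i := fun x hx => hx.1
  unfold WiSet
  split_ifs
  · exact Submodule.span_le (p := Ai) |>.mpr (Set.union_subset hX fun x hx => hx.1)
  · exact hX

theorem sub_mem_WiSet {π : B} {i : ℕ} (hi : Even i) {x y : L} (hx : x ∈ WiSet π h i)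
    (hy : y ∈ WiSet π h i) : x - y ∈ WiSet π h i := by
  simp only [WiSet, if_pos hi, SetLike.mem_coe] at *
  exact sub_mem hx hy

end Lattice

theorem apply_add_add_self {B L F : Type*} [CommRing B] [Add L] [FunLike F B B]
    [AddHomClass F B B] {σ : F} {f : L → L → B}
    (fadd : ∀ x y z : L, f (x + y) z = f x z + f y z)
    (fsymm : ∀ v w : L, f w v = σ (f v w)) (w z : L) :
    f (w + z) (w + z) = f w w + (f z w + f w z) + f z z := by
  have fadd' : ∀ x y z : L, f x (y + z) = f x y + f x z := fun x y z => by
    rw [fsymm, fadd, map_add, ← fsymm, ← fsymm]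
  rw [fadd, fadd', fadd']
  ring

theorem condition_d_stable_under_action_general
    {A : Type*} [CommRing A]
    (δ : A)
    {B : Type*} [CommRing B] [Algebra A B]
    (π : B) (hπ : π ^ 2 = algebraMap A B (2 * δ))
    (σ : B ≃ₐ[A] B) (hσπ : σ π = -π)
    (hBfree : ∀ b : B, ∃! p : A × A, b = algebraMap A B p.1 + algebraMap A B p.2 * π)
    {L : Type*} [AddCommGroup L] [Module B L]
    (h : L → L → B)
    (hadd : ∀ x y z : L, h (x + y) z = h x z + h y z)
    (hsmul : ∀ (a b : B) (v w : L), h (a • v) (b • w) = σ a * b * h v w)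
    (i : ℕ) (hi : Even i)
    (f : L → L → B)
    (fadd : ∀ x y z : L, f (x + y) z = f x z + f y z)
    (fsymm : ∀ v w : L, f w v = σ (f v w))
    (hfc : ∀ x ∈ AiSet π h i, ∀ w ∈ WiSet π h i, π ^ (i + 1) ∣ (f x w - h x w))
    (hfd : ∀ w ∈ WiSet π h i, ∃ a : A,
        f w w - h w w = algebraMap A B (2 ^ ((i + 1) / 2 + 2) * a))
    (g : L →ₗ[B] L)
    (hgW : ∀ w ∈ WiSet π h i, g w ∈ WiSet π h i)
    (hgid : ∀ w ∈ WiSet π h i, g w - w ∈ XiSet π h i ∩ ZiSet A π h i) :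
    ∀ w ∈ WiSet π h i, ∃ a : A,
      f (g w) (g w) - h w w = algebraMap A B (2 ^ ((i + 1) / 2 + 2) * a) := by
  obtain ⟨m, hm⟩ := hi
  have hk : (i + 1) / 2 = m := by omega
  simp only [hk, ← mem_twoPowA] at hfd ⊢
  intro w hw
  obtain ⟨hzX, hzZ⟩ := hgid w hw
  set z := g w - w
  have hzW : z ∈ WiSet π h i := sub_mem_WiSet ⟨m, hm⟩ (hgW w hw) hw
  have hWA := WiSet_subset_AiSet π hadd (fun a v w => by simpa using hsmul a 1 v w) i
  have hfzw : π ^ (2 * m + 1) ∣ f z w := by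
    simpa [hm, two_mul] using dvd_add (hfc z hzX.1 w hw) (hzX.2 w (hWA hw))
  have htrace : f z w + f w z ∈ twoPowA A B (m + 2) := by
    rw [fsymm z w]
    exact add_conj_mem_twoPowA_of_pow_dvd hπ hσπ (fun b => (hBfree b).exists) hfzw
  have hhzz : h z z ∈ twoPowA A B (m + 2) := by
    obtain ⟨a, ha⟩ := hzZ.2
    exact mem_twoPowA.mpr ⟨a, by rw [ha, hk]⟩
  have hexpand : f (g w) (g w) - h w w =
      (f w w - h w w) + (f z w + f w z) + (f z z - h z z) + h z z := by
    rw [← add_sub_cancel w (g w), apply_add_add_self fadd fsymm]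
    ring
  rw [hexpand]
  exact add_mem (add_mem (add_mem (hfd w hw) htrace) (hfd z hzW)) hhzz

/-- for even `i = 2m`, if a hermitian form `f` satisfies the congruences
`f(x,w) ≡ h(x,w) mod π^{i+1}` on `A_i × W_i` and `f(w,w) ≡ h(w,w) mod 2^{m+2}A` on `W_i`,
and `g` is a `B`-linear map with `g(W_i) ⊆ W_i` inducing the identity on `W_i/(X_i ∩ Z_i)`,
then `f ∘ g` again satisfies `f(gw,gw) ≡ h(w,w) mod 2^{m+2}A` on `W_i`. -/
theorem condition_d_stable_under_action
    {A : Type*} [CommRing A] [IsDomain A] [IsDiscreteValuationRing A] [CharZero A]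
    (hmax : IsLocalRing.maximalIdeal A = Ideal.span {2})
    [IsAdicComplete (IsLocalRing.maximalIdeal A) A]
    [CharP (IsLocalRing.ResidueField A) 2]
    [PerfectRing (IsLocalRing.ResidueField A) 2]
    (δ : A) (hδunit : IsUnit δ) (hδ1 : (2 : A) ∣ (δ - 1))
    {B : Type*} [CommRing B] [IsDomain B] [Algebra A B]
    (π : B) (hπ : π ^ 2 = algebraMap A B (2 * δ))
    (σ : B ≃ₐ[A] B) (hσπ : σ π = -π) (hσinv : ∀ b : B, σ (σ b) = b)
    (hBfree : ∀ b : B, ∃! p : A × A, b = algebraMap A B p.1 + algebraMap A B p.2 * π)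
    {L : Type*} [AddCommGroup L] [Module B L] [Module.Free B L] [Module.Finite B L]
    (h : L → L → B)
    (hadd : ∀ x y z : L, h (x + y) z = h x z + h y z)
    (hsmul : ∀ (a b : B) (v w : L), h (a • v) (b • w) = σ a * b * h v w)
    (hsymm : ∀ v w : L, h w v = σ (h v w))
    (hnd : ∀ v : L, (∀ w : L, h v w = 0) → v = 0)
    (i : ℕ) (hi : Even i)
    (f : L → L → B)
    (fadd : ∀ x y z : L, f (x + y) z = f x z + f y z)
    (fsmul : ∀ (a b : B) (v w : L), f (a • v) (b • w) = σ a * b * f v w)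
    (fsymm : ∀ v w : L, f w v = σ (f v w))
    (hfc : ∀ x ∈ AiSet π h i, ∀ w ∈ WiSet π h i, π ^ (i + 1) ∣ (f x w - h x w))
    (hfd : ∀ w ∈ WiSet π h i, ∃ a : A,
        f w w - h w w = algebraMap A B (2 ^ ((i + 1) / 2 + 2) * a))
    (g : L →ₗ[B] L)
    (hgW : ∀ w ∈ WiSet π h i, g w ∈ WiSet π h i)
    (hgid : ∀ w ∈ WiSet π h i, g w - w ∈ XiSet π h i ∩ ZiSet A π h i) :
    ∀ w ∈ WiSet π h i, ∃ a : A,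
      f (g w) (g w) - h w w = algebraMap A B (2 ^ ((i + 1) / 2 + 2) * a) :=
  condition_d_stable_under_action_general δ π hπ σ hσπ hBfree h hadd hsmul i hi f fadd fsymm hfc hfd
    g hgW hgid
end

section
/- The commutative A-algebra A[X,Y]/(X + X² − 2δ·Y²) is smooth over A, i.e. formally smooth and of finite presentation. (It is the coordinate ring of the smooth integral model of the unitary group attached to the rank-one unimodular hermitian lattice over B = A[π], π² = 2δ.) -/
/-!
Newton's method in one step. Write `f = X + X² - 2δY²`. Since
`(1 + 2X) ∂f/∂X + 2Y ∂f/∂Y = 1 + 4f`, the substitution `X ↦ X - (1 + 2X) f`, `Y ↦ Y - 2Y f`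
is the identity modulo `f` and sends `f` into `(f²)`. It therefore induces a section of
`A[X,Y]/(f²) → A[X,Y]/(f)`, which is exactly the lifting criterion for formal smoothness of a
quotient of the formally smooth algebra `A[X,Y]`.
-/

open MvPolynomial

theorem Algebra.FormallySmooth.quotient_of_algHom_mapsTo_sq {R P : Type*} [CommRing R]
    [CommRing P] [Algebra R P] [Algebra.FormallySmooth R P] (I : Ideal P) (φ : P →ₐ[R] P)
    (hφI : ∀ p ∈ I, φ p ∈ I ^ 2) (hφ : ∀ p, φ p - p ∈ I) :
    Algebra.FormallySmooth R (P ⧸ I) := by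
  let π := Ideal.Quotient.mkₐ R I
  have hker : RingHom.ker π.toRingHom = I := Ideal.mk_ker
  let s : P ⧸ I →ₐ[R] P ⧸ RingHom.ker π.toRingHom ^ 2 :=
    Ideal.Quotient.liftₐ I ((Ideal.Quotient.mkₐ R _).comp φ) fun p hp ↦ by
      rw [AlgHom.comp_apply, Ideal.Quotient.mkₐ_eq_mk, Ideal.Quotient.eq_zero_iff_mem, hker]
      exact hφI p hp
  refine Algebra.FormallySmooth.of_split π s (AlgHom.ext fun x ↦ ?_)
  obtain ⟨p, rfl⟩ := Ideal.Quotient.mk_surjective x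
  exact Ideal.Quotient.eq.mpr (hφ p)

theorem MvPolynomial.aeval_sub_self_mem {R σ : Type*} [CommRing R]
    (I : Ideal (MvPolynomial σ R)) (w : σ → MvPolynomial σ R) (hw : ∀ i, w i - X i ∈ I)
    (p : MvPolynomial σ R) : aeval w p - p ∈ I := by
  have : (Ideal.Quotient.mkₐ R I).comp (aeval w) = Ideal.Quotient.mkₐ R I :=
    algHom_ext fun i ↦ by simpa using Ideal.Quotient.eq.mpr (hw i)
  exact Ideal.Quotient.eq.mp (AlgHom.congr_fun this p)

theorem MvPolynomial.formallySmooth_quotient_span_singleton {R σ : Type*} [CommRing R]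
    (f : MvPolynomial σ R) (w : σ → MvPolynomial σ R) (hw : ∀ i, f ∣ w i - X i)
    (hf : f ^ 2 ∣ aeval w f) :
    Algebra.FormallySmooth R (MvPolynomial σ R ⧸ Ideal.span {f}) := by
  refine Algebra.FormallySmooth.quotient_of_algHom_mapsTo_sq _ (aeval w) (fun p hp ↦ ?_)
    (aeval_sub_self_mem _ w fun i ↦ Ideal.mem_span_singleton.mpr (hw i))
  obtain ⟨q, rfl⟩ := Ideal.mem_span_singleton'.mp hp
  rw [Ideal.span_singleton_pow, map_mul]
  exact Ideal.mul_mem_left _ _ (Ideal.mem_span_singleton.mpr hf)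

theorem formallySmooth_quotient_X_add_X_sq_sub {A : Type*} [CommRing A] (δ : A) :
    Algebra.FormallySmooth A
      (MvPolynomial (Fin 2) A ⧸
        Ideal.span {(X 0 : MvPolynomial (Fin 2) A) + X 0 ^ 2 - C (2 * δ) * X 1 ^ 2}) := by
  set f : MvPolynomial (Fin 2) A := X 0 + X 0 ^ 2 - C (2 * δ) * X 1 ^ 2
  refine formallySmooth_quotient_span_singleton f ![X 0 - (1 + 2 * X 0) * f, X 1 - 2 * X 1 * f]
    (Fin.forall_fin_two.mpr ⟨⟨-(1 + 2 * X 0), by simp only [Matrix.cons_val_zero]; ring⟩,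
      ⟨-(2 * X 1), by simp only [Matrix.cons_val_one, Matrix.cons_val_fin_one]; ring⟩⟩)
    ⟨(1 + 2 * X 0) ^ 2 - C (2 * δ) * (2 * X 1) ^ 2 - 4, ?_⟩
  simp only [f, map_add, map_sub, map_mul, map_pow, aeval_X, aeval_C, algebraMap_eq,
    Matrix.cons_val_zero, Matrix.cons_val_one]
  ring

open MvPolynomial in
theorem smooth_model_is_smooth_general
    {A : Type*} [CommRing A]
    (δ : A) :
    Algebra.FormallySmooth A
      (MvPolynomial (Fin 2) A ⧸
        Ideal.span {(X 0 : MvPolynomial (Fin 2) A) + X 0 ^ 2 - C (2 * δ) * X 1 ^ 2}) ∧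
    Algebra.FinitePresentation A
      (MvPolynomial (Fin 2) A ⧸
        Ideal.span {(X 0 : MvPolynomial (Fin 2) A) + X 0 ^ 2 - C (2 * δ) * X 1 ^ 2}) :=
  ⟨formallySmooth_quotient_X_add_X_sq_sub δ,
    Algebra.FinitePresentation.quotient (Submodule.fg_span_singleton _)⟩

open MvPolynomial in
/-- the `A`-algebra `A[X,Y]/(X + X² - 2δY²)` is smooth over `A`,
i.e. formally smooth and of finite presentation. -/
theorem smooth_model_is_smooth
    {A : Type*} [CommRing A] [IsDomain A] [IsDiscreteValuationRing A] [CharZero A]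
    (hmax : IsLocalRing.maximalIdeal A = Ideal.span {2})
    [IsAdicComplete (IsLocalRing.maximalIdeal A) A]
    (δ : A) (hδunit : IsUnit δ) (hδ1 : (2 : A) ∣ (δ - 1)) :
    Algebra.FormallySmooth A
      (MvPolynomial (Fin 2) A ⧸
        Ideal.span {(X 0 : MvPolynomial (Fin 2) A) + X 0 ^ 2 - C (2 * δ) * X 1 ^ 2}) ∧
    Algebra.FinitePresentation A
      (MvPolynomial (Fin 2) A ⧸
        Ideal.span {(X 0 : MvPolynomial (Fin 2) A) + X 0 ^ 2 - C (2 * δ) * X 1 ^ 2}) :=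
  smooth_model_is_smooth_general δ
end

section
/- For every integer N ≥ 1, the number of pairs (x,y) ∈ (A/2^N A) × (A/2^N A) satisfying x + x² = 2δ·y² in A/2^N A equals 2·f^N. -/
/-!
Since `2` lies in the maximal ideal, `X ^ 2 + X - 2c` reduces to `X (X + 1)`, whose root `0` is
simple, so by Hensel's lemma `x + x ^ 2 = 2c` is solvable in `A` for every `c`, hence in every
quotient `A ⧸ (2 ^ N)`. That quotient is local with `2` in its maximal ideal, and there
`x + x ^ 2 = a + a ^ 2` forces `x = a` or `x = -1 - a`, two distinct values because `2a + 1` is a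
unit. So every `y` carries exactly two `x`, and the solutions number
`2 · #(A ⧸ (2 ^ N)) = 2 f ^ N`.
-/

open IsLocalRing Polynomial

section AddSq

variable {R : Type*} [CommRing R] [IsLocalRing R]

theorem isUnit_two_mul_add_one (h2 : (2 : R) ∈ maximalIdeal R) (a : R) : IsUnit (2 * a + 1) := by
  by_contra h
  have h1 : (1 : R) ∈ maximalIdeal R := by
    simpa using (maximalIdeal R).sub_mem ((mem_maximalIdeal _).mpr h)
      ((maximalIdeal R).mul_mem_right a h2)
  exact (maximalIdeal.isMaximal R).ne_top ((Ideal.eq_top_iff_one _).mpr h1)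

theorem neg_one_sub_ne_self (h2 : (2 : R) ∈ maximalIdeal R) (a : R) : -1 - a ≠ a := fun h =>
  (isUnit_two_mul_add_one h2 a).ne_zero (by linear_combination -h)

/-- The factors of `(a - x) * (x + a + 1) = 0` add up to the unit `2a + 1`, so in a local ring
one of them is a unit and the other vanishes. -/
theorem eq_or_eq_neg_one_sub_of_add_sq_eq (h2 : (2 : R) ∈ maximalIdeal R) {a x : R}
    (h : x + x ^ 2 = a + a ^ 2) : x = a ∨ x = -1 - a := by
  have hprod : (a - x) * (x + a + 1) = 0 := by linear_combination -h
  have hsum : IsUnit ((a - x) + (x + a + 1)) := by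
    convert isUnit_two_mul_add_one h2 a using 1; ring
  rcases isUnit_or_isUnit_of_isUnit_add hsum with hu | hu
  · right; linear_combination hu.mul_right_eq_zero.mp hprod
  · left; linear_combination -hu.mul_left_eq_zero.mp hprod

noncomputable def boolEquivAddSqFiber (h2 : (2 : R) ∈ maximalIdeal R) {a c : R}
    (ha : a + a ^ 2 = c) : Bool ≃ {x : R // x + x ^ 2 = c} :=
  Equiv.ofBijective (fun b => bif b then ⟨a, ha⟩ else ⟨-1 - a, by rw [← ha]; ring⟩) <| by
    refine ⟨?_, fun ⟨x, hx⟩ => ?_⟩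
    · intro b b' hbb'
      cases b <;> cases b' <;> simp_all [neg_one_sub_ne_self h2 a, (neg_one_sub_ne_self h2 a).symm]
    · rcases eq_or_eq_neg_one_sub_of_add_sq_eq h2 (hx.trans ha.symm) with rfl | rfl
      exacts [⟨true, rfl⟩, ⟨false, rfl⟩]

theorem natCard_add_sq_eq (h2 : (2 : R) ∈ maximalIdeal R) (g : R → R)
    (hg : ∀ y, ∃ x, x + x ^ 2 = g y) :
    Nat.card {p : R × R // p.1 + p.1 ^ 2 = g p.2} = 2 * Nat.card R := by
  choose a ha using hg
  calc Nat.card {p : R × R // p.1 + p.1 ^ 2 = g p.2}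
      = Nat.card (Σ y, {x : R // x + x ^ 2 = g y}) :=
        Nat.card_congr <| ((Equiv.prodComm R R).subtypeEquiv fun _ => Iff.rfl).trans
          (Equiv.subtypeProdEquivSigmaSubtype fun y x => x + x ^ 2 = g y)
    _ = Nat.card (R × Bool) :=
        Nat.card_congr <|
          (Equiv.sigmaCongrRight fun y => (boolEquivAddSqFiber h2 (ha y)).symm).trans
            (Equiv.sigmaEquivProd R Bool)
    _ = 2 * Nat.card R := by
        rw [Nat.card_prod, Nat.card_eq_fintype_card (α := Bool), Fintype.card_bool, mul_comm]

end AddSq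

theorem HenselianRing.exists_add_sq_eq_two_mul {R : Type*} [CommRing R] {I : Ideal R}
    [HenselianRing R I] (h2 : (2 : R) ∈ I) (c : R) : ∃ a : R, a + a ^ 2 = 2 * c := by
  have hmonic : (X ^ 2 + (X - C (2 * c)) : R[X]).Monic :=
    monic_X_pow_add <| (degree_X_sub_C_le _).trans_lt (by norm_num)
  obtain ⟨a, ha, -⟩ := HenselianRing.is_henselian _ hmonic 0
    (by simpa using I.neg_mem (I.mul_mem_right c h2)) (by simp)
  exact ⟨a, by linear_combination (by simpa using ha : a ^ 2 + (a - 2 * c) = 0)⟩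

theorem nontrivial_quotient_span_pow {R : Type*} [CommRing R] {x : R} (hx : ¬IsUnit x) {N : ℕ}
    (hN : N ≠ 0) : Nontrivial (R ⧸ Ideal.span {x ^ N}) :=
  Ideal.Quotient.nontrivial_iff.mpr <| by
    rwa [Ne, Ideal.span_singleton_eq_top, isUnit_pow_iff hN]

theorem IsNilpotent.mem_maximalIdeal {R : Type*} [CommRing R] [IsLocalRing R] {x : R}
    (hx : IsNilpotent x) : x ∈ maximalIdeal R :=
  (IsLocalRing.mem_maximalIdeal x).mpr hx.not_isUnit

theorem IsDiscreteValuationRing.natCard_quotient_span_pow {A : Type*} [CommRing A] [IsDomain A]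
    [IsDiscreteValuationRing A] {ϖ : A} (hϖ : IsLocalRing.maximalIdeal A = Ideal.span {ϖ})
    (N : ℕ) :
    Nat.card (A ⧸ Ideal.span {ϖ ^ N}) = Nat.card (ResidueField A) ^ N := by
  rw [← Ideal.span_singleton_pow, ← hϖ, ← Submodule.cardQuot_apply,
    cardQuot_pow_of_prime (IsDiscreteValuationRing.not_a_field A), Submodule.cardQuot_apply]
  rfl

theorem card_solutions_smooth_model_general
    {A : Type*} [CommRing A] [IsDomain A] [IsDiscreteValuationRing A]
    (hmax : IsLocalRing.maximalIdeal A = Ideal.span {2})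
    [IsAdicComplete (IsLocalRing.maximalIdeal A) A]
    (f : ℕ) (hf : Nat.card (IsLocalRing.ResidueField A) = f)
    (δ : A) :
    ∀ N : ℕ, 1 ≤ N →
      Nat.card {p : (A ⧸ Ideal.span {(2 : A) ^ N}) × (A ⧸ Ideal.span {(2 : A) ^ N}) //
          p.1 + p.1 ^ 2 = Ideal.Quotient.mk (Ideal.span {(2 : A) ^ N}) (2 * δ) * p.2 ^ 2}
        = 2 * f ^ N := by
  intro N hN
  set I := Ideal.span {(2 : A) ^ N}
  have h2 : (2 : A) ∈ maximalIdeal A := hmax ▸ Ideal.mem_span_singleton_self 2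
  have : Nontrivial (A ⧸ I) :=
    nontrivial_quotient_span_pow ((mem_maximalIdeal _).mp h2) (by omega)
  have : IsLocalRing (A ⧸ I) := .of_surjective' _ Ideal.Quotient.mk_surjective
  have h2I : (2 : A ⧸ I) ∈ maximalIdeal (A ⧸ I) := IsNilpotent.mem_maximalIdeal
    ⟨N, by rw [← map_ofNat (Ideal.Quotient.mk I), ← map_pow, Ideal.Quotient.eq_zero_iff_mem]
           exact Ideal.mem_span_singleton_self _⟩
  have hroots : ∀ y : A ⧸ I, ∃ x, x + x ^ 2 = Ideal.Quotient.mk I (2 * δ) * y ^ 2 := by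
    intro y
    obtain ⟨y, rfl⟩ := Ideal.Quotient.mk_surjective y
    obtain ⟨r, hr⟩ := HenselianRing.exists_add_sq_eq_two_mul h2 (δ * y ^ 2)
    exact ⟨Ideal.Quotient.mk I r, by simpa [mul_assoc] using congrArg (Ideal.Quotient.mk I) hr⟩
  rw [natCard_add_sq_eq h2I (fun y => Ideal.Quotient.mk I (2 * δ) * y ^ 2) hroots,
    IsDiscreteValuationRing.natCard_quotient_span_pow hmax, hf]

/-- for every `N ≥ 1`, the number of solutions of `x + x² = 2δy²`
in `(A/2^N A)²` equals `2·f^N`, where `f` is the cardinality of the residue field. -/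
theorem card_solutions_smooth_model
    {A : Type*} [CommRing A] [IsDomain A] [IsDiscreteValuationRing A] [CharZero A]
    (hmax : IsLocalRing.maximalIdeal A = Ideal.span {2})
    [IsAdicComplete (IsLocalRing.maximalIdeal A) A]
    (f : ℕ) (hf : Nat.card (IsLocalRing.ResidueField A) = f)
    (δ : A) (hδunit : IsUnit δ) (hδ1 : (2 : A) ∣ (δ - 1)) :
    ∀ N : ℕ, 1 ≤ N →
      Nat.card {p : (A ⧸ Ideal.span {(2 : A) ^ N}) × (A ⧸ Ideal.span {(2 : A) ^ N}) //
          p.1 + p.1 ^ 2 = Ideal.Quotient.mk (Ideal.span {(2 : A) ^ N}) (2 * δ) * p.2 ^ 2}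
        = 2 * f ^ N :=
  card_solutions_smooth_model_general hmax f hf δ
end
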